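/- Let w₁ > w₂ be real and set χ = w₁ − w₂. Define u: ℝ → ℝ by u(t) = w₁·t + √(χ² + 4e^t) − χ·log((χ + √(χ² + 4e^t))/2). Then u is differentiable and u'(t) = (w₁ + w₂ + √(χ² + 4e^t))/2 for every t ∈ ℝ. -/

import Mathlib

/-!
With `Δ = √(χ² + 4eᵗ)` one has `Δ' = 2eᵗ/Δ`, and since `4eᵗ = (Δ - χ)(Δ + χ)` the logarithmic
term has derivative `(Δ - χ)/(2Δ)`. Hence `u' = w₁ + (Δ² - χ² - χΔ + χ²)/(2Δ) = w₁ + (Δ - χ)/2`,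
which is `(w₁ + w₂ + Δ)/2` because `χ = w₁ - w₂`.
-/

open Real

noncomputable section

/-- `Δ(q) = √(χ² + 4q)` at `q = eᵗ`. -/
def sqrtDisc (χ t : ℝ) : ℝ := √(χ ^ 2 + 4 * exp t)

variable (χ t : ℝ)

lemma sqrtDisc_pos : 0 < sqrtDisc χ t := sqrt_pos.2 (by positivity)

lemma sqrtDisc_sq : sqrtDisc χ t ^ 2 = χ ^ 2 + 4 * exp t := sq_sqrt (by positivity)

lemma abs_lt_sqrtDisc : |χ| < sqrtDisc χ t :=
  lt_sqrt_of_sq_lt (by rw [sq_abs]; linarith [exp_pos t])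

lemma add_sqrtDisc_pos : 0 < χ + sqrtDisc χ t := by
  linarith [neg_abs_le χ, abs_lt_sqrtDisc χ t]

lemma hasDerivAt_sqrtDisc : HasDerivAt (sqrtDisc χ) (2 * exp t / sqrtDisc χ t) t := by
  have hinner : HasDerivAt (fun s => χ ^ 2 + 4 * exp s) (4 * exp t) t :=
    ((hasDerivAt_exp t).const_mul 4).const_add _
  refine (hinner.sqrt (by positivity)).congr_deriv ?_
  unfold sqrtDisc
  ring

lemma hasDerivAt_log_half_add_sqrtDisc :
    HasDerivAt (fun s => log ((χ + sqrtDisc χ s) / 2))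
      ((sqrtDisc χ t - χ) / (2 * sqrtDisc χ t)) t := by
  have hΔ := sqrtDisc_pos χ t
  have hχΔ := add_sqrtDisc_pos χ t
  refine (((hasDerivAt_sqrtDisc χ t).const_add χ).div_const 2 |>.log (by positivity)).congr_deriv ?_
  field_simp
  linear_combination -sqrtDisc_sq χ t

end

theorem deriv_canonical_coordinate (w₁ w₂ : ℝ) (χ : ℝ)
    (hχ : χ = w₁ - w₂) (u : ℝ → ℝ)
    (hu : u = fun t => w₁ * t + Real.sqrt (χ ^ 2 + 4 * Real.exp t) -
      χ * Real.log ((χ + Real.sqrt (χ ^ 2 + 4 * Real.exp t)) / 2)) :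
    ∀ t : ℝ, HasDerivAt u ((w₁ + w₂ + Real.sqrt (χ ^ 2 + 4 * Real.exp t)) / 2) t := by
  intro t
  subst hu
  have hΔ := sqrtDisc_pos χ t
  refine ((((hasDerivAt_id t).const_mul w₁).add (hasDerivAt_sqrtDisc χ t)).sub
    ((hasDerivAt_log_half_add_sqrtDisc χ t).const_mul χ)).congr_deriv ?_
  rw [← sqrtDisc]
  field_simp
  linear_combination -sqrtDisc_sq χ t - sqrtDisc χ t * hχ
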